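/- arXiv:1202.3173 — 3 statements merged into one kernel-verified Lean document; each statement's English description precedes it below -/
import Mathlib

section
/- The recurrence F(n,P) = 18·(n²/(4P)) + F(n/2, P/7) with base case F(n,1) = c_s·n^{ω₀} − 6n², where ω₀ = log₂ 7, has solution F(n,P) = (c_s·n^{ω₀} − 6n²)/P for all P = 7^k and n divisible by 2^k. -/
/-!
Write `G n = c n^ω₀ - 6 n²` for the cost of a local Strassen multiplication. Since `2^ω₀ = 7`,
doubling the matrix size gives `G (2n) = 7 G n + 18 n²`: the `18 n²` is exactly the cost of the
eighteen quadrant additions of one recursion level. Hence `G (2^k m) / 7^k` satisfies the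
recurrence, and it agrees with `F` at `k = 0`.
-/

namespace Real

theorem mul_rpow_of_pos_left {x : ℝ} (hx : 0 < x) (y z : ℝ) : (x * y) ^ z = x ^ z * y ^ z := by
  rcases le_or_gt 0 y with hy | hy
  · exact mul_rpow hx.le hy
  · rw [rpow_def_of_neg (mul_neg_of_pos_of_neg hx hy), rpow_def_of_neg hy, rpow_def_of_pos hx,
      log_mul hx.ne' hy.ne, add_mul, exp_add, mul_assoc]

theorem base_mul_rpow_logb {b x : ℝ} (b_pos : 0 < b) (b_ne_one : b ≠ 1) (hx : 0 < x) (n : ℝ) :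
    (b * n) ^ logb b x = x * n ^ logb b x := by
  rw [mul_rpow_of_pos_left b_pos, rpow_logb b_pos b_ne_one hx]

end Real

noncomputable def strassenCost (c n : ℝ) : ℝ := c * n ^ Real.logb 2 7 - 6 * n ^ 2

theorem strassenCost_two_mul (c n : ℝ) :
    strassenCost c (2 * n) = 7 * strassenCost c n + 18 * n ^ 2 := by
  simp only [strassenCost, Real.base_mul_rpow_logb two_pos (by norm_num) (by norm_num : (0 : ℝ) < 7)]
  ring

/-- the recurrence F(n,P) = 18·(n²/(4P)) + F(n/2, P/7) with base case
    F(n,1) = c_s·n^{ω₀} − 6n² has solution F(n,P) = (c_s·n^{ω₀} − 6n²)/P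
    for P = 7^k and n divisible by 2^k. -/
theorem F_UM_formula (c : ℝ) (F : ℝ → ℝ → ℝ)
    (hbase : ∀ n : ℝ, F n 1 = c * n ^ Real.logb 2 7 - 6 * n ^ 2)
    (hrec : ∀ n : ℝ, ∀ k : ℕ, 0 < k →
      F n (7 ^ k) = 18 * (n ^ 2 / (4 * 7 ^ k)) + F (n / 2) (7 ^ (k - 1))) :
    ∀ (k : ℕ) (m : ℝ), 0 < m →
      F (2 ^ k * m) (7 ^ k)
        = (c * (2 ^ k * m) ^ Real.logb 2 7 - 6 * (2 ^ k * m) ^ 2) / 7 ^ k := by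
  intro k m _
  change F (2 ^ k * m) (7 ^ k) = strassenCost c (2 ^ k * m) / 7 ^ k
  induction k with
  | zero => simp [hbase, strassenCost]
  | succ k ih =>
    have hdouble : (2 : ℝ) ^ (k + 1) * m = 2 * (2 ^ k * m) := by ring
    rw [hrec _ (k + 1) k.succ_pos, Nat.add_sub_cancel, hdouble,
      mul_div_cancel_left₀ _ two_ne_zero, ih, strassenCost_two_mul]
    field_simp
    ring
end

section
/- Let M, n, P > 0 satisfy 3n²/P ≤ M/3, and let ℓ = max{0, ⌈log₂(4n/(P^{1/ω₀}·M^{1/2}))⌉} with ω₀ = log₂ 7. Then (M/3)·Σ_{i=0}^{ℓ−1}(1/4)^i + 7·(n/2^ℓ)²/P^{2/ω₀} ≤ (127/144)·M < M. -/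
/-!
Each of the ℓ DFS steps costs at most a quarter of the previous one, so they cost at most
(M/3)·(4/3) = 4M/9 in total. Since 2^ℓ ≥ 4n/(P^{1/ω₀}·M^{1/2}) by the choice of ℓ, the
subproblem of size n/2^ℓ satisfies (n/2^ℓ)² ≤ P^{2/ω₀}·M/16, so the Unlimited Memory scheme
on it needs at most 7M/16. Finally 4/9 + 7/16 = 127/144.
-/

open Real

lemma div_pow_le_of_logb_div_le {b x c : ℝ} {k : ℕ} (hb : 1 < b) (hx : 0 < x) (hc : 0 < c)
    (h : logb b (x / c) ≤ k) : x / b ^ k ≤ c := by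
  rw [logb_le_iff_le_rpow hb (div_pos hx hc), rpow_natCast, div_le_iff₀ hc] at h
  rwa [div_le_iff₀ (pow_pos (by linarith) k), mul_comm]

lemma sq_rpow_one_div {P : ℝ} (hP : 0 ≤ P) (e : ℝ) : (P ^ (1 / e)) ^ 2 = P ^ (2 / e) := by
  rw [← rpow_natCast, ← rpow_mul hP]
  ring_nf

lemma sq_div_rpow_two_div_le {y P M : ℝ} (hy : 0 ≤ y) (hP : 0 < P) (hM : 0 ≤ M) (e : ℝ)
    (h : y ≤ P ^ (1 / e) * M ^ ((1 : ℝ) / 2) / 4) : y ^ 2 / P ^ (2 / e) ≤ M / 16 := by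
  have hsq : y ^ 2 ≤ P ^ (2 / e) * M / 16 :=
    calc y ^ 2 ≤ (P ^ (1 / e) * M ^ ((1 : ℝ) / 2) / 4) ^ 2 := pow_le_pow_left₀ hy h 2
      _ = (P ^ (1 / e)) ^ 2 * (M ^ ((1 : ℝ) / 2)) ^ 2 / 16 := by ring
      _ = P ^ (2 / e) * M / 16 := by
        rw [sq_rpow_one_div hP.le, sq_rpow_one_div hM, div_self two_ne_zero, rpow_one]
  rw [div_le_iff₀ (rpow_pos_of_pos hP _)]
  linarith

theorem mem_LM_bound_general (n P M : ℝ) (hn : 0 < n) (hP : 0 < P) (hM : 0 < M)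
    (ℓ : ℕ)
    (hℓ : ℓ = ⌈Real.logb 2 (4 * n /
      (P ^ ((1 : ℝ) / Real.logb 2 7) * M ^ ((1 : ℝ) / 2)))⌉₊) :
    (M / 3) * ∑ i ∈ Finset.range ℓ, ((1 : ℝ) / 4) ^ i
        + 7 * (n / 2 ^ ℓ) ^ 2 / P ^ ((2 : ℝ) / Real.logb 2 7)
      ≤ 127 / 144 * M
    ∧ 127 / 144 * M < M := by
  set c := P ^ ((1 : ℝ) / logb 2 7) * M ^ ((1 : ℝ) / 2) / 4
  have hc : 0 < c := by positivity
  have hlog : logb 2 (n / c) ≤ ℓ := by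
    rw [hℓ, show n / c = 4 * n / (P ^ ((1 : ℝ) / logb 2 7) * M ^ ((1 : ℝ) / 2)) by
      simp only [c]; field_simp]
    exact Nat.le_ceil _
  have hresidual : (n / 2 ^ ℓ) ^ 2 / P ^ ((2 : ℝ) / logb 2 7) ≤ M / 16 :=
    sq_div_rpow_two_div_le (by positivity) hP hM.le _
      (div_pow_le_of_logb_div_le one_lt_two hn hc hlog)
  have hgeom : ∑ i ∈ Finset.range ℓ, ((1 : ℝ) / 4) ^ i ≤ 4 / 3 := by
    have := geom_sum_Ico_le_of_lt_one (m := 0) (n := ℓ) (x := (1 : ℝ) / 4) (by norm_num)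
      (by norm_num)
    norm_num [← Finset.range_eq_Ico] at this ⊢
    exact this
  have hsteps := mul_le_mul_of_nonneg_left hgeom (by positivity : 0 ≤ M / 3)
  constructor
  · rw [mul_div_assoc]
    linarith
  · linarith

/-- memory-requirement bound for the Limited Memory scheme of CAPS.
    With 3n²/P ≤ M/3 and ℓ = max{0, ⌈log₂(4n/(P^{1/ω₀}M^{1/2}))⌉},
    (M/3)·Σ_{i=0}^{ℓ−1}(1/4)^i + 7(n/2^ℓ)²/P^{2/ω₀} ≤ (127/144)M < M. -/
theorem mem_LM_bound (n P M : ℝ) (hn : 0 < n) (hP : 0 < P) (hM : 0 < M)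
    (hmem : 3 * n ^ 2 / P ≤ M / 3)
    (ℓ : ℕ)
    (hℓ : ℓ = ⌈Real.logb 2 (4 * n /
      (P ^ ((1 : ℝ) / Real.logb 2 7) * M ^ ((1 : ℝ) / 2)))⌉₊) :
    (M / 3) * ∑ i ∈ Finset.range ℓ, ((1 : ℝ) / 4) ^ i
        + 7 * (n / 2 ^ ℓ) ^ 2 / P ^ ((2 : ℝ) / Real.logb 2 7)
      ≤ 127 / 144 * M
    ∧ 127 / 144 * M < M :=
  mem_LM_bound_general n P M hn hP hM ℓ hℓ
end

section
/- For the Strassen-2D algorithm taking ℓ Strassen DFS steps on top of a 2D classical algorithm, the bandwidth cost satisfies BW(n,P,ℓ) = 7^ℓ·BW_2D(n/2^ℓ, P) = (7/4)^ℓ·Θ(n²/P^{1/2}) and the latency cost satisfies L(n,P,ℓ) = 7^ℓ·Θ(P^{1/2}), given BW_2D(m,P) = Θ(m²/P^{1/2}) and L_2D(m,P) = Θ(P^{1/2}). -/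
section DivideAndConquer

variable {K M : Type*} [Field K] (b : K)

theorem eq_pow_mul_of_succ_eq_mul_div [Monoid M] {f : K → ℕ → M} {c : M}
    (hf : ∀ x k, f x (k + 1) = c * f (x / b) k) (x : K) (k : ℕ) :
    f x k = c ^ k * f (x / b ^ k) 0 := by
  induction k generalizing x with
  | zero => simp
  | succ k ih => rw [hf, ih, div_div, ← pow_succ', ← mul_assoc, ← pow_succ']

theorem apply_div_pow_of_apply_div [Field M] {g : K → M} {d : M}
    (hg : ∀ x, g (x / b) = g x / d) (x : K) (k : ℕ) :
    g (x / b ^ k) = g x / d ^ k := by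
  induction k with
  | zero => simp
  | succ k ih => rw [pow_succ, ← div_div, hg, ih, pow_succ, div_div]

end DivideAndConquer

/-- the Strassen-2D algorithm with ℓ DFS Strassen steps on top of a 2D
    algorithm satisfies BW(n,P,ℓ) = 7^ℓ·BW_2D(n/2^ℓ,P) = (7/4)^ℓ·BW_2D(n,P) and
    L(n,P,ℓ) = 7^ℓ·L_2D(n,P). -/
theorem strassen2D_costs (P : ℝ) (BW2D L2D : ℝ → ℝ → ℝ) (BW L : ℝ → ℝ → ℕ → ℝ)
    (hBW0 : ∀ n : ℝ, BW n P 0 = BW2D n P)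
    (hBWrec : ∀ (n : ℝ) (ℓ : ℕ), BW n P (ℓ + 1) = 7 * BW (n / 2) P ℓ)
    (hBW2Dhalf : ∀ n : ℝ, BW2D (n / 2) P = BW2D n P / 4)
    (hL0 : ∀ n : ℝ, L n P 0 = L2D n P)
    (hLrec : ∀ (n : ℝ) (ℓ : ℕ), L n P (ℓ + 1) = 7 * L (n / 2) P ℓ)
    (hL2Dhalf : ∀ n : ℝ, L2D (n / 2) P = L2D n P) :
    ∀ (n : ℝ) (ℓ : ℕ),
      BW n P ℓ = 7 ^ ℓ * BW2D (n / 2 ^ ℓ) P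
      ∧ BW n P ℓ = ((7 : ℝ) / 4) ^ ℓ * BW2D n P
      ∧ L n P ℓ = 7 ^ ℓ * L2D n P := by
  intro n ℓ
  have hBW : BW n P ℓ = 7 ^ ℓ * BW2D (n / 2 ^ ℓ) P := by
    rw [eq_pow_mul_of_succ_eq_mul_div 2 (f := fun n ℓ ↦ BW n P ℓ) hBWrec, hBW0]
  have hL2D : L2D (n / 2 ^ ℓ) P = L2D n P := by
    simpa using apply_div_pow_of_apply_div 2 (g := fun n ↦ L2D n P) (d := 1)
      (by simpa using hL2Dhalf) n ℓ
  refine ⟨hBW, ?_, ?_⟩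
  · rw [hBW, apply_div_pow_of_apply_div 2 (g := fun n ↦ BW2D n P) hBW2Dhalf, div_pow]
    ring
  · rw [eq_pow_mul_of_succ_eq_mul_div 2 (f := fun n ℓ ↦ L n P ℓ) hLrec, hL0, hL2D]
end
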